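/- Let L be a positive semidefinite n×n real matrix. Then the assignment P(S) = det(L_S) / det(L + I) for subsets S ⊆ {1,...,n} defines a probability distribution: P(S) ≥ 0 for all S and Σ_S P(S) = 1. -/

import Mathlib

namespace Matrix

variable {n R : Type*} [Fintype n] [DecidableEq n]

/-- Expanding `det (M + 1)` multilinearly in the rows, the term taking the rows of `M` on `s`
and those of `1` elsewhere is the principal minor on `s`. -/
theorem det_add_one_eq_sum_det_submatrix [CommRing R] (M : Matrix n n R) :
    (M + 1).det = ∑ s : Finset n, (M.submatrix ((↑) : s → n) (↑)).det := by
  change detRowAlternating (M.row + (1 : Matrix n n R).row) = _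
  rw [AlternatingMap.map_add_univ]
  exact Finset.sum_congr rfl fun s _ => det_piecewise_one_eq_submatrix_det M s

open scoped ComplexOrder in
theorem PosSemidef.det_add_one_pos {𝕜 : Type*} [RCLike 𝕜] {M : Matrix n n 𝕜}
    (hM : M.PosSemidef) : 0 < (M + 1).det :=
  (PosDef.posSemidef_add hM PosDef.one).det_pos

end Matrix

/-- The L-ensemble assignment P(S) = det(L_S)/det(L+I) is a probability distribution. -/
theorem stmt8 (n : ℕ) (L : Matrix (Fin n) (Fin n) ℝ) (hL : L.PosSemidef) :
    (∀ S : Finset (Fin n),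
        0 ≤ (L.submatrix (fun i : {x // x ∈ S} => (i : Fin n))
              (fun j : {x // x ∈ S} => (j : Fin n))).det / (L + 1).det) ∧
      ∑ S : Finset (Fin n),
          (L.submatrix (fun i : {x // x ∈ S} => (i : Fin n))
            (fun j : {x // x ∈ S} => (j : Fin n))).det / (L + 1).det = 1 := by
  have hpos := hL.det_add_one_pos
  refine ⟨fun S => div_nonneg (hL.submatrix _).det_nonneg hpos.le, ?_⟩
  rw [← Finset.sum_div, ← L.det_add_one_eq_sum_det_submatrix, div_self hpos.ne']
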